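/- Let G be a profinite group which is virtually abelian (has an open abelian normal subgroup), and suppose the word w_o takes fewer than 2^{\aleph_0} values in G. Then the center Z(w_o(G)) is open in w_o(G), and consequently, by Schur's theorem, the commutator subgroup w_o(G)' is finite. -/

import Mathlib

/-!
An infinite profinite group has at least `2^ℵ₀` elements: along a strictly decreasing chain of
open subgroups `N k` with `t k ∈ N k \ N (k + 1)`, every `σ : ℕ → Bool` determines a nested
sequence of cosets whose intersection point recovers `σ`.

Fix an open abelian normal subgroup `A`. For `g ∈ G`, `a ↦ ⁅a, g⁆` is a homomorphism on `A` with
kernel `A ∩ C_G(g)`, and `⁅a, g⁆ * g` is a conjugate of `g`. If `g` is a `w_o`-value, its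
conjugates are `w_o`-values, so the compact image of this homomorphism is finite; hence
`C_G(g)` has finite index and is open. Finitely many `w_o`-values `g_i`, one in each coset of `A`
that contains one, generate together with `A` a subgroup containing `w_o(G)`, so the open
subgroup `B = A ∩ ⋂ C_G(g_i)` centralizes `w_o(G)`. Thus `Z(w_o(G))` is open, hence of finite
index; since commutators depend only on cosets of the centre, there are finitely many of them,
and Schur's theorem makes `w_o(G)'` finite.
-/

open Cardinal
open scoped commutatorElement

/-- The auxiliary word `v(x,y) = [[x^d, y^d]^d, [y^d, x^{-d}]^d]`. -/
def vWord {G : Type*} [Group G] (d : ℕ) (x y : G) : G :=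
  ⁅⁅x ^ d, y ^ d⁆ ^ d, ⁅y ^ d, (x⁻¹) ^ d⁆ ^ d⁆

/-- The signs `ε_i` in Olshanskii's word, with `ε_0 = 1`. -/
def eps (i : ℕ) : ℤ :=
  if i = 0 ∨ i % 10 = 1 ∨ i % 10 = 2 ∨ i % 10 = 3 ∨ i % 10 = 5 ∨ i % 10 = 6 then 1 else -1

/-- Olshanskii's word
`w_o(x,y) = [x,y] v(x,y)^n [x,y]^{ε_1} v(x,y)^{n+1} ⋯ [x,y]^{ε_{h-1}} v(x,y)^{n+h-1}`. -/
def wo {G : Type*} [Group G] (d n h : ℕ) (x y : G) : G :=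
  ((List.range h).map fun i => ⁅x, y⁆ ^ eps i * vWord d x y ^ (n + i)).prod

/-- The set of `w_o`-values in `G`. -/
def woValues (G : Type*) [Group G] (d n h : ℕ) : Set G :=
  {g : G | ∃ x y : G, wo d n h x y = g}

open scoped Pointwise

section Cardinality

variable {K : Type*} [Group K]

def digitProd (t : ℕ → K) (σ : ℕ → Bool) : ℕ → K
  | 0 => 1
  | k + 1 => digitProd t σ k * bif σ k then t k else 1

variable [TopologicalSpace K] [IsTopologicalGroup K] [CompactSpace K]

theorem continuum_le_mk_of_strictAnti {N : ℕ → Subgroup K} (hN : StrictAnti N)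
    (hNc : ∀ k, IsClosed (N k : Set K)) : 𝔠 ≤ #K := by
  choose t ht hnt using fun k : ℕ => SetLike.exists_of_lt (hN k.lt_succ_self)
  set x := digitProd t
  have hstep : ∀ σ k, (x σ k)⁻¹ * x σ (k + 1) ∈ N k := fun σ k => by
    cases h : σ k <;> simp [x, digitProd, h, ht]
  have hsub : ∀ σ k, x σ (k + 1) • (N (k + 1) : Set K) ⊆ x σ k • (N k : Set K) := by
    intro σ k y hy
    rw [mem_leftCoset_iff] at hy ⊢
    simpa [mul_assoc] using (N k).mul_mem (hstep σ k) (hN.antitone k.le_succ hy)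
  have hlimit : ∀ σ, ∃ F, ∀ k, F ∈ x σ k • (N k : Set K) := fun σ => by
    simpa using IsCompact.nonempty_iInter_of_sequence_nonempty_isCompact_isClosed
      (fun k => x σ k • (N k : Set K)) (hsub σ) (fun k => ⟨x σ k, mem_own_leftCoset _ _⟩)
      ((hNc 0).leftCoset _).isCompact (fun k => (hNc k).leftCoset _)
  choose F hF using hlimit
  -- The digit `σ k` is read off from the coset of `N (k + 1)` containing `F σ`.
  have hdigit : ∀ σ τ k, x σ k = x τ k → F σ = F τ → σ k = τ k := by
    intro σ τ k hx hF'
    have hσ := hF σ (k + 1)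
    have hτ := hF τ (k + 1)
    rw [mem_leftCoset_iff] at hσ hτ
    have := (N (k + 1)).mul_mem hσ ((N (k + 1)).inv_mem hτ)
    simp only [x, digitProd, hx, hF', mul_inv_rev, inv_inv] at this
    cases hσk : σ k <;> cases hτk : τ k <;> simp_all
  have hinj : Function.Injective F := by
    intro σ τ hF'
    have hx : ∀ k, x σ k = x τ k := by
      intro k
      induction k with
      | zero => rfl
      | succ k ih => simp only [x, digitProd] at ih ⊢; rw [ih, hdigit σ τ k ih hF']
    exact funext fun k => hdigit σ τ k (hx k) hF'
  simpa using Cardinal.lift_mk_le_lift_mk_of_injective hinj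

end Cardinality

section Profinite

variable {K : Type*} [Group K] [TopologicalSpace K] [IsTopologicalGroup K] [CompactSpace K]
  [TotallyDisconnectedSpace K]

theorem OpenSubgroup.exists_lt [Infinite K] (U : OpenSubgroup K) : ∃ V : OpenSubgroup K, V < U := by
  have : (U : Subgroup K).FiniteIndex := Subgroup.finiteIndex_of_finite_quotient
  have : Infinite U := not_finite_iff_infinite.mp fun hU =>
    have := (Subgroup.finite_iff_finite_and_finiteIndex (U : Subgroup K)).mpr ⟨hU, this⟩
    not_finite K
  obtain ⟨⟨t, htU⟩, ht1⟩ := exists_ne (1 : U)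
  obtain ⟨H, hH⟩ := ProfiniteGrp.exist_openNormalSubgroup_sub_open_nhds_of_one
    (isOpen_compl_singleton (x := t)) (Ne.symm (Subtype.coe_ne_coe.mpr ht1))
  exact ⟨U ⊓ H.toOpenSubgroup, SetLike.lt_iff_le_and_exists.mpr
    ⟨inf_le_left, t, htU, fun h => hH h.2 rfl⟩⟩

theorem continuum_le_mk_of_infinite [Infinite K] : 𝔠 ≤ #K := by
  choose next hnext using OpenSubgroup.exists_lt (K := K)
  refine continuum_le_mk_of_strictAnti (N := fun k => (next^[k] ⊤ : OpenSubgroup K))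
    (strictAnti_nat_of_succ_lt fun k => ?_) fun k => OpenSubgroup.isClosed _
  rw [Function.iterate_succ_apply']
  exact SetLike.coe_ssubset_coe.mp (SetLike.coe_ssubset_coe.mpr (hnext _))

theorem finite_of_mk_lt_continuum (h : #K < 𝔠) : Finite K :=
  not_infinite_iff_finite.mp fun _ => continuum_le_mk_of_infinite.not_gt h

end Profinite

section Words

variable {G H : Type*} [Group G] [Group H]

theorem map_wo (f : G →* H) (d n h : ℕ) (x y : G) :
    f (wo d n h x y) = wo d n h (f x) (f y) := by
  simp only [wo, vWord, map_list_prod, List.map_map, Function.comp_def, map_mul, map_zpow,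
    map_pow, map_commutatorElement, map_inv]

theorem conjugatesOf_subset_woValues {d n h : ℕ} {g : G} (hg : g ∈ woValues G d n h) :
    conjugatesOf g ⊆ woValues G d n h := by
  intro g' hg'
  obtain ⟨c, rfl⟩ := isConj_iff.mp hg'
  obtain ⟨x, y, rfl⟩ := hg
  exact ⟨MulAut.conj c x, MulAut.conj c y, (map_wo (MulAut.conj c).toMonoidHom d n h x y).symm⟩

end Words

section AbelianNormal

variable {G : Type*} [Group G] {A : Subgroup G}

@[simps]
def Subgroup.commutatorRightHom (hA : A.Normal) (hAab : ∀ a ∈ A, ∀ b ∈ A, a * b = b * a)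
    (g : G) : A →* G where
  toFun a := ⁅(a : G), g⁆
  map_one' := by simp
  map_mul' := by
    rintro ⟨a, ha⟩ ⟨b, hb⟩
    have hcomm : g * a⁻¹ * g⁻¹ * ⁅b, g⁆ = ⁅b, g⁆ * (g * a⁻¹ * g⁻¹) :=
      hAab _ (hA.conj_mem _ (inv_mem ha) g) _ (by
        simpa only [commutatorElement_def, mul_assoc] using
          mul_mem hb (hA.conj_mem _ (inv_mem hb) g))
    show ⁅a * b, g⁆ = ⁅a, g⁆ * ⁅b, g⁆
    calc ⁅a * b, g⁆ = a * (⁅b, g⁆ * (g * a⁻¹ * g⁻¹)) := by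
          simp only [commutatorElement_def]; group
      _ = ⁅a, g⁆ * ⁅b, g⁆ := by
          rw [← hcomm]; simp only [commutatorElement_def]; group

end AbelianNormal

section CompactGroup

variable {G : Type*} [Group G] [TopologicalSpace G] [IsTopologicalGroup G] [CompactSpace G]

theorem Subgroup.isOpen_of_isClosed_of_relIndex_ne_zero {H A : Subgroup G}
    (hA : IsOpen (A : Set G)) (hH : IsClosed (H : Set G)) (h : H.relIndex A ≠ 0) :
    IsOpen (H : Set G) := by
  have : Finite (G ⧸ A) := A.quotient_finite_of_isOpen hA
  have : A.FiniteIndex := A.finiteIndex_of_finite_quotient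
  have hAi : A.relIndex ⊤ ≠ 0 := A.relIndex_top_right ▸ A.index_ne_zero_of_finite
  have : H.FiniteIndex := ⟨H.relIndex_top_right ▸ H.relIndex_ne_zero_trans h hAi⟩
  exact H.isOpen_of_isClosed_of_finiteIndex hH

variable [TotallyDisconnectedSpace G]

theorem isOpen_centralizer_of_mk_conjugatesOf_lt {A : Subgroup G} (hAo : IsOpen (A : Set G))
    (hA : A.Normal) (hAab : ∀ a ∈ A, ∀ b ∈ A, a * b = b * a) {g : G}
    (hg : #(conjugatesOf g) < 𝔠) : IsOpen (Subgroup.centralizer {g} : Set G) := by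
  set f := Subgroup.commutatorRightHom hA hAab g
  have : CompactSpace A := isCompact_iff_compactSpace.mp (A.isClosed_of_isOpen hAo).isCompact
  have hf : Continuous f := by
    simp only [f, Subgroup.commutatorRightHom, MonoidHom.coe_mk, OneHom.coe_mk,
      commutatorElement_def]
    fun_prop
  have : CompactSpace f.range := isCompact_iff_compactSpace.mp <| by
    rw [MonoidHom.coe_range]
    exact isCompact_range hf
  have hconj : ∀ k : f.range, (k : G) * g ∈ conjugatesOf g := by
    rintro ⟨_, a, rfl⟩
    exact isConj_iff.mpr ⟨a, by simp [f, commutatorElement_def]⟩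
  have : Finite f.range := finite_of_mk_lt_continuum <|
    (Cardinal.mk_le_of_injective (f := fun k : f.range => (⟨k * g, hconj k⟩ : conjugatesOf g))
      fun k k' h => Subtype.ext (mul_right_cancel (congrArg Subtype.val h))).trans_lt hg
  have hker : f.ker = (Subgroup.centralizer {g}).subgroupOf A := by
    ext a
    simp [f, commutatorElement_eq_one_iff_mul_comm, Subgroup.mem_subgroupOf,
      Subgroup.mem_centralizer_singleton_iff]
  refine Subgroup.isOpen_of_isClosed_of_relIndex_ne_zero hAo (Set.isClosed_centralizer _) ?_
  rw [Subgroup.relIndex, ← hker, Subgroup.index_ker]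
  exact Nat.card_pos.ne'

end CompactGroup

section FiniteIndex

variable {G : Type*} [Group G]

theorem Subgroup.exists_finite_subset_closure_le_sup (V : Set G) (A : Subgroup G)
    [Finite (G ⧸ A)] : ∃ S ⊆ V, S.Finite ∧ Subgroup.closure V ≤ Subgroup.closure S ⊔ A := by
  obtain ⟨S, hSV, hS⟩ := Set.exists_subset_bijOn V ((↑) : G → G ⧸ A)
  refine ⟨S, hSV, Set.Finite.of_finite_image (hS.image_eq ▸ Set.toFinite _) hS.injOn,
    (Subgroup.closure_le _).mpr fun g hg => ?_⟩
  obtain ⟨s, hs, hsg⟩ := hS.surjOn ⟨g, hg, rfl⟩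
  simpa using Subgroup.mul_mem_sup (Subgroup.subset_closure hs) (QuotientGroup.eq.mp hsg)

end FiniteIndex

section Schur

variable {G : Type*} [Group G]

theorem commutatorElement_mul_mem_center {z z' : G} (hz : z ∈ Subgroup.center G)
    (hz' : z' ∈ Subgroup.center G) (g k : G) : ⁅g * z, k * z'⁆ = ⁅g, k⁆ := by
  have hleft : ∀ {c : G}, c ∈ Subgroup.center G → ∀ x y : G, ⁅x * c, y⁆ = ⁅x, y⁆ := by
    intro c hc x y
    have hcy : c * y * c⁻¹ = y := by rw [← Subgroup.mem_center_iff.mp hc y, mul_inv_cancel_right]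
    calc ⁅x * c, y⁆ = x * (c * y * c⁻¹) * x⁻¹ * y⁻¹ := by simp only [commutatorElement_def]; group
      _ = ⁅x, y⁆ := by rw [hcy, commutatorElement_def]
  rw [hleft hz, ← commutatorElement_inv, hleft hz', commutatorElement_inv]

theorem finite_commutatorSet_of_finite_quotient_center [Finite (G ⧸ Subgroup.center G)] :
    Finite (commutatorSet G) := by
  refine Set.Finite.to_subtype <| (Set.finite_range fun p : (G ⧸ Subgroup.center G) ×
    (G ⧸ Subgroup.center G) => ⁅p.1.out, p.2.out⁆).subset ?_
  rintro _ ⟨a, b, rfl⟩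
  obtain ⟨z, ha⟩ := QuotientGroup.mk_out_eq_mul (Subgroup.center G) a
  obtain ⟨z', hb⟩ := QuotientGroup.mk_out_eq_mul (Subgroup.center G) b
  exact ⟨(a, b), by simp only [ha, hb, commutatorElement_mul_mem_center z.2 z'.2]⟩

end Schur

section TopologicalCenter

variable {G : Type*} [Group G] [TopologicalSpace G]

theorem Subgroup.isOpen_centralizer_of_finite {S : Set G} (hS : S.Finite)
    (h : ∀ g ∈ S, IsOpen (Subgroup.centralizer {g} : Set G)) :
    IsOpen (Subgroup.centralizer S : Set G) := by
  have : (Subgroup.centralizer S : Set G) = ⋂ g ∈ S, (Subgroup.centralizer {g} : Set G) := by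
    ext k
    simp [Subgroup.mem_centralizer_iff]
  rw [this]
  exact hS.isOpen_biInter h

variable [IsTopologicalGroup G]

theorem Subgroup.isOpen_center_of_le_centralizer {W B : Subgroup G} (hB : IsOpen (B : Set G))
    (hWB : W ≤ Subgroup.centralizer B) : IsOpen (Subgroup.center W : Set W) := by
  refine Subgroup.isOpen_mono (H₁ := B.comap W.subtype) (fun k hk => ?_)
    (hB.preimage continuous_subtype_val)
  exact Subgroup.mem_center_iff.mpr fun w => Subtype.ext (hWB w.2 k hk).symm

theorem finite_commutator_of_isOpen_center [CompactSpace G]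
    (h : IsOpen (Subgroup.center G : Set G)) : Finite (commutator G) := by
  have : Finite (G ⧸ Subgroup.center G) := Subgroup.quotient_finite_of_isOpen _ h
  have := finite_commutatorSet_of_finite_quotient_center (G := G)
  infer_instance

theorem Subgroup.finite_commutator_of_isOpen_center [CompactSpace G] {W : Subgroup G}
    (hW : IsClosed (W : Set G)) (h : IsOpen (Subgroup.center W : Set W)) :
    Finite (⁅W, W⁆ : Subgroup G) := by
  have : CompactSpace W := isCompact_iff_compactSpace.mp hW.isCompact
  have := _root_.finite_commutator_of_isOpen_center h
  rw [← W.range_subtype, MonoidHom.range_eq_map, ← Subgroup.map_commutator,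
    ← _root_.commutator_def]
  exact Finite.of_equiv _ (equivMapOfInjective _ _ W.subtype_injective).toEquiv

end TopologicalCenter

theorem stmt14_general {G : Type*} [Group G] [TopologicalSpace G] [IsTopologicalGroup G]
    [CompactSpace G] [TotallyDisconnectedSpace G]
    (d n h : ℕ)
    (hva : ∃ A : Subgroup G, A.Normal ∧ IsOpen (A : Set G) ∧
      ∀ a ∈ A, ∀ b ∈ A, a * b = b * a)
    (hcard : #(woValues G d n h) < Cardinal.continuum) :
    IsOpen ((Subgroup.center ↥((Subgroup.closure (woValues G d n h)).topologicalClosure) :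
        Subgroup ↥((Subgroup.closure (woValues G d n h)).topologicalClosure)) :
        Set ↥((Subgroup.closure (woValues G d n h)).topologicalClosure)) ∧
      Finite ↥(⁅(Subgroup.closure (woValues G d n h)).topologicalClosure,
        (Subgroup.closure (woValues G d n h)).topologicalClosure⁆ : Subgroup G) := by
  obtain ⟨A, hA, hAo, hAab⟩ := hva
  set W := (Subgroup.closure (woValues G d n h)).topologicalClosure
  have : Finite (G ⧸ A) := A.quotient_finite_of_isOpen hAo
  obtain ⟨S, hSV, hS, hVS⟩ := Subgroup.exists_finite_subset_closure_le_sup (woValues G d n h) A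
  set B := A ⊓ Subgroup.centralizer S
  have hBo : IsOpen (B : Set G) := hAo.inter <| Subgroup.isOpen_centralizer_of_finite hS
    fun g hg => isOpen_centralizer_of_mk_conjugatesOf_lt hAo hA hAab <|
      (Cardinal.mk_le_mk_of_subset (conjugatesOf_subset_woValues (hSV hg))).trans_lt hcard
  have hB : Subgroup.closure S ⊔ A ≤ Subgroup.centralizer B :=
    sup_le ((Subgroup.closure_le _).mpr fun s hs b hb => (hb.2 s hs).symm)
      fun a ha b hb => hAab b hb.1 a ha
  have hWB : W ≤ Subgroup.centralizer B :=
    Subgroup.topologicalClosure_minimal _ (hVS.trans hB) (Set.isClosed_centralizer _)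
  have hZ := Subgroup.isOpen_center_of_le_centralizer hBo hWB
  exact ⟨hZ, W.finite_commutator_of_isOpen_center (Subgroup.isClosed_topologicalClosure _) hZ⟩

/-- If `G` is a virtually abelian profinite group with fewer than `2^ℵ₀`
`w_o`-values, then the center of `w_o(G)` (the closed verbal subgroup) is open in
`w_o(G)` and hence, by Schur's theorem, `w_o(G)'` is finite. -/
theorem stmt14 {G : Type*} [Group G] [TopologicalSpace G] [IsTopologicalGroup G]
    [CompactSpace G] [T2Space G] [TotallyDisconnectedSpace G]
    (d n h : ℕ) (hd : 0 < d) (hn : 0 < n) (hh : h % 10 = 1) (hh' : 50000 < h)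
    (hva : ∃ A : Subgroup G, A.Normal ∧ IsOpen (A : Set G) ∧
      ∀ a ∈ A, ∀ b ∈ A, a * b = b * a)
    (hcard : #(woValues G d n h) < Cardinal.continuum) :
    IsOpen ((Subgroup.center ↥((Subgroup.closure (woValues G d n h)).topologicalClosure) :
        Subgroup ↥((Subgroup.closure (woValues G d n h)).topologicalClosure)) :
        Set ↥((Subgroup.closure (woValues G d n h)).topologicalClosure)) ∧
      Finite ↥(⁅(Subgroup.closure (woValues G d n h)).topologicalClosure,
        (Subgroup.closure (woValues G d n h)).topologicalClosure⁆ : Subgroup G) :=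
  stmt14_general d n h hva hcard
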